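/- arXiv:2406.07108 — 2 statements merged into one kernel-verified Lean document; each statement's English description precedes it below -/
import Mathlib

section
/- Let n be an even positive natural number and z : Fin n → ℝ with z₁ ≥ z₂ ≥ ... ≥ zₙ > 0. Suppose c > 0 satisfies z_k ≤ c · z_{2k} for all k ≤ n/2. Then the geometric mean (∏_{k=1}^n z_k)^{1/n} ≤ c^4 · z_n. -/
lemma pair_prod (f : ℕ → ℝ) (m : ℕ) :
    ∏ k ∈ Finset.Ioc 0 (2*m), f k
      = ∏ k ∈ Finset.Ioc 0 m, (f (2*k-1) * f (2*k)) := by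
  induction m with
  | zero => simp
  | succ m ih =>
    have h1 : 2*(m+1) = (2*m+1)+1 := by ring
    rw [h1, Finset.prod_Ioc_succ_top (by omega), Finset.prod_Ioc_succ_top (by omega),
      Finset.prod_Ioc_succ_top (by omega), ih]
    have : 2*(m+1)-1 = 2*m+1 := by omega
    rw [this]
    have : 2*(m+1) = 2*m+1+1 := by omega
    rw [this]
    ring

theorem regularity_lemma (n : ℕ) (hn : 0 < n) (heven : Even n) (z : ℕ → ℝ)
    (hpos : ∀ k, 1 ≤ k → k ≤ n → 0 < z k)
    (hmono : ∀ j k, 1 ≤ j → j ≤ k → k ≤ n → z k ≤ z j)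
    (c : ℝ) (hc : 0 < c)
    (hreg : ∀ k, 1 ≤ k → 2 * k ≤ n → z k ≤ c * z (2 * k)) :
    (∏ k ∈ Finset.Icc 1 n, z k) ^ ((n : ℝ)⁻¹) ≤ c ^ 4 * z n := by
  obtain ⟨m, hm⟩ := heven
  have hnm : n = 2 * m := by omega
  subst hnm
  have hm1 : 1 ≤ m := by omega
  -- c ≥ 1
  have hc1 : 1 ≤ c := by
    have h1 := hreg 1 le_rfl (by omega)
    have h2 := hmono 1 2 le_rfl (by omega) (by omega)
    have h3 := hpos 2 (by omega) (by omega)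
    nlinarith
  have hIcc : Finset.Icc 1 (2*m) = Finset.Ioc 0 (2*m) := by
    ext x; simp [Nat.lt_iff_add_one_le]
  set P := ∏ k ∈ Finset.Icc 1 (2*m), z k with hP
  set E := ∏ k ∈ Finset.Ioc 0 m, z (2*k) with hE
  set O := ∏ k ∈ Finset.Ioc 0 m, z (2*k-1) with hO
  have hEpos : 0 < E := Finset.prod_pos (fun k hk => by
    simp at hk; exact hpos _ (by omega) (by omega))
  have hOpos : 0 < O := Finset.prod_pos (fun k hk => by
    simp at hk; exact hpos _ (by omega) (by omega))
  have hznpos : 0 < z (2*m) := hpos _ (by omega) le_rfl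
  have hPOE : P = O * E := by
    rw [hP, hIcc, pair_prod, Finset.prod_mul_distrib]
  have hPpos : 0 < P := by rw [hPOE]; positivity
  -- E ≤ O
  have hEO : E ≤ O := by
    apply Finset.prod_le_prod (fun k hk => le_of_lt (by
      simp at hk; exact hpos _ (by omega) (by omega)))
    intro k hk
    simp at hk
    exact hmono (2*k-1) (2*k) (by omega) (by omega) (by omega)
  -- split P
  have hsplit : P = (∏ k ∈ Finset.Ioc 0 m, z k) * (∏ k ∈ Finset.Ioc m (2*m), z k) := by
    rw [hP, hIcc, ← Finset.prod_Ioc_consecutive _ (Nat.zero_le m) (by omega)]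
  -- first half
  have hA : (∏ k ∈ Finset.Ioc 0 m, z k) ≤ c ^ m * E := by
    have : (∏ k ∈ Finset.Ioc 0 m, z k) ≤ ∏ k ∈ Finset.Ioc 0 m, (c * z (2*k)) := by
      apply Finset.prod_le_prod (fun k hk => le_of_lt (by
        simp at hk; exact hpos _ (by omega) (by omega)))
      intro k hk
      simp at hk
      exact hreg k (by omega) (by omega)
    rwa [Finset.prod_mul_distrib, Finset.prod_const, Nat.card_Ioc, Nat.sub_zero] at this
  -- second half
  have hB : (∏ k ∈ Finset.Ioc m (2*m), z k) ≤ (c * z (2*m)) ^ m := by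
    have : (∏ k ∈ Finset.Ioc m (2*m), z k) ≤ ∏ _k ∈ Finset.Ioc m (2*m), (c * z (2*m)) := by
      apply Finset.prod_le_prod (fun k hk => le_of_lt (by
        simp at hk; exact hpos _ (by omega) (by omega)))
      intro k hk
      simp at hk
      calc z k ≤ z m := hmono m k hm1 (by omega) (by omega)
        _ ≤ c * z (2*m) := hreg m hm1 le_rfl
    rwa [Finset.prod_const, Nat.card_Ioc, show 2*m - m = m by omega] at this
  have hPle : P ≤ c ^ m * E * (c * z (2*m)) ^ m := by
    rw [hsplit]
    apply mul_le_mul hA hB (Finset.prod_nonneg (fun k hk => le_of_lt (by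
      simp at hk; exact hpos _ (by omega) (by omega)))) (by positivity)
  -- P ≤ (c^2 z_n)^{2m}
  have hkey : P ≤ (c^2 * z (2*m)) ^ (2*m) := by
    have hE2 : E * E ≤ P := by
      rw [hPOE]
      exact mul_le_mul_of_nonneg_right hEO hEpos.le
    have h2 : P * P ≤ (c ^ m * (c * z (2*m)) ^ m)^2 * P := by
      calc P * P ≤ (c ^ m * E * (c * z (2*m)) ^ m) * (c ^ m * E * (c * z (2*m)) ^ m) :=
            mul_le_mul hPle hPle hPpos.le (by positivity)
        _ = (c ^ m * (c * z (2*m)) ^ m)^2 * (E * E) := by ring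
        _ ≤ (c ^ m * (c * z (2*m)) ^ m)^2 * P :=
            mul_le_mul_of_nonneg_left hE2 (by positivity)
    have h3 : P ≤ (c ^ m * (c * z (2*m)) ^ m)^2 :=
      le_of_mul_le_mul_right (by linarith [h2]) hPpos
    calc P ≤ (c ^ m * (c * z (2*m)) ^ m)^2 := h3
      _ = (c^2 * z (2*m)) ^ (2*m) := by rw [mul_pow, ← pow_mul, ← pow_mul]; ring_nf
  have hfinal : P ≤ (c^4 * z (2*m)) ^ (2*m) := by
    calc P ≤ (c^2 * z (2*m)) ^ (2*m) := hkey
      _ ≤ (c^4 * z (2*m)) ^ (2*m) := by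
          apply pow_le_pow_left₀ (by positivity)
          have : c^2 ≤ c^4 := pow_le_pow_right₀ hc1 (by omega)
          nlinarith
  -- take n-th root
  have h2m : (2*m : ℕ) ≠ 0 := by omega
  have hx : 0 ≤ c^4 * z (2*m) := by positivity
  calc P ^ ((2*m : ℕ) : ℝ)⁻¹ ≤ ((c^4 * z (2*m)) ^ (2*m : ℕ)) ^ ((2*m : ℕ) : ℝ)⁻¹ := by
        apply Real.rpow_le_rpow hPpos.le hfinal (by positivity)
    _ = c^4 * z (2*m) := Real.pow_rpow_inv_natCast hx h2m
end

section
/- Let f be uniformly distributed on the unit sphere of ℝ^{2n}, condition on the first n coordinates equaling y ∈ ℝⁿ with ‖y‖ < 1. Then the conditional distribution of the last n coordinates is the uniform distribution on the sphere of radius r_y = √(1 − ‖y‖²) in ℝⁿ, and for any point φ ∈ ℝ^{2n} with first n coordinates y, the conditional expectation of ‖f − φ‖ is minimized (over choices of the last n coordinates of φ) when the last n coordinates of φ are 0, with minimal value at least r_y. -/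
open MeasureTheory

theorem two_mul_norm_le_norm_sub_add_norm_add {E : Type*} [NormedAddCommGroup E]
    [NormedSpace ℝ E] (v c : E) : 2 * ‖v‖ ≤ ‖v - c‖ + ‖v + c‖ :=
  calc 2 * ‖v‖ = ‖(v - c) + (v + c)‖ := by
        rw [sub_add_add_cancel, ← two_smul ℝ, norm_smul, Real.norm_two]
    _ ≤ ‖v - c‖ + ‖v + c‖ := norm_add_le _ _

/-- By symmetry the errors at `c` and at `-c` are equal, and their average already dominates
the error at `0`. -/
theorem integral_norm_le_integral_norm_sub {E : Type*} [NormedAddCommGroup E] [NormedSpace ℝ E]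
    [MeasurableSpace E] [MeasurableNeg E] (μ : Measure E) [IsFiniteMeasure μ] [μ.IsNegInvariant]
    (hμ : Integrable (fun v => v) μ) (c : E) : ∫ v, ‖v‖ ∂μ ≤ ∫ v, ‖v - c‖ ∂μ := by
  have hsub : Integrable (fun v => ‖v - c‖) μ := (hμ.sub (integrable_const c)).norm
  have hadd : Integrable (fun v => ‖v + c‖) μ := (hμ.add (integrable_const c)).norm
  have hsymm : ∫ v, ‖v + c‖ ∂μ = ∫ v, ‖v - c‖ ∂μ := by
    rw [← integral_neg_eq_self]
    simp only [neg_add_eq_sub, norm_sub_rev]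
  have htwice : 2 * ∫ v, ‖v‖ ∂μ ≤ 2 * ∫ v, ‖v - c‖ ∂μ :=
    calc 2 * ∫ v, ‖v‖ ∂μ = ∫ v, 2 * ‖v‖ ∂μ := (integral_const_mul _ _).symm
      _ ≤ ∫ v, ‖v - c‖ + ‖v + c‖ ∂μ :=
        integral_mono (hμ.norm.const_mul 2) (hsub.add hadd)
          fun v => two_mul_norm_le_norm_sub_add_norm_add v c
      _ = 2 * ∫ v, ‖v - c‖ ∂μ := by rw [integral_add hsub hadd, hsymm, two_mul]
  linarith

theorem integral_norm_of_ae_norm_eq {E : Type*} [NormedAddCommGroup E] [MeasurableSpace E]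
    (μ : Measure E) [IsProbabilityMeasure μ] {r : ℝ} (h : ∀ᵐ v ∂μ, ‖v‖ = r) :
    ∫ v, ‖v‖ ∂μ = r := by
  rw [integral_congr_ae h, integral_const, probReal_univ, one_smul]

theorem conditional_error_minimized_at_center_general (n : ℕ)
    (r : ℝ)
    (ν : Measure (EuclideanSpace ℝ (Fin n))) [IsProbabilityMeasure ν]
    (hsupp : ∀ᵐ v ∂ν, ‖v‖ = r)
    (hinv : ∀ e : EuclideanSpace ℝ (Fin n) ≃ₗᵢ[ℝ] EuclideanSpace ℝ (Fin n),
      ν.map e = ν) :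
    (∀ c : EuclideanSpace ℝ (Fin n), (∫ v, ‖v - 0‖ ∂ν) ≤ ∫ v, ‖v - c‖ ∂ν) ∧
    (∫ v, ‖v - 0‖ ∂ν) = r ∧ r ≤ ∫ v, ‖v - 0‖ ∂ν := by
  have : ν.IsNegInvariant := ⟨hinv (LinearIsometryEquiv.neg ℝ)⟩
  have hint : Integrable (fun v => v) ν :=
    Integrable.of_bound continuous_id.aestronglyMeasurable r (hsupp.mono fun _ hv => hv.le)
  have hmean : ∫ v, ‖v - 0‖ ∂ν = r := by
    simpa only [sub_zero] using integral_norm_of_ae_norm_eq ν hsupp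
  refine ⟨fun c => ?_, hmean, hmean.ge⟩
  simpa only [sub_zero] using integral_norm_le_integral_norm_sub ν hint c

/-- After observing the first `n` coordinates `y` (with `‖y‖ < 1`) of a point
uniformly distributed on the unit sphere of `ℝ^{2n}`, the conditional
distribution `ν` of the last `n` coordinates is the uniform distribution on
the sphere of radius `r = √(1 - ‖y‖²)`: it is a probability measure supported
on that sphere and rotation invariant.  For any reconstruction point `φ` whose
first `n` coordinates equal `y` (so that `‖f - φ‖ = ‖v - c‖` where `v, c` are
the vectors of last coordinates), the conditional expected error is minimized
when `c = 0` (the center of the sphere), with minimal value `r ≥ r`. -/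
theorem conditional_error_minimized_at_center (n : ℕ) (hn : 0 < n)
    (y : EuclideanSpace ℝ (Fin n)) (hy : ‖y‖ < 1)
    (r : ℝ) (hr : r = Real.sqrt (1 - ‖y‖ ^ 2))
    (ν : Measure (EuclideanSpace ℝ (Fin n))) [IsProbabilityMeasure ν]
    (hsupp : ∀ᵐ v ∂ν, ‖v‖ = r)
    (hinv : ∀ e : EuclideanSpace ℝ (Fin n) ≃ₗᵢ[ℝ] EuclideanSpace ℝ (Fin n),
      ν.map e = ν) :
    (∀ c : EuclideanSpace ℝ (Fin n), (∫ v, ‖v - 0‖ ∂ν) ≤ ∫ v, ‖v - c‖ ∂ν) ∧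
    (∫ v, ‖v - 0‖ ∂ν) = r ∧ r ≤ ∫ v, ‖v - 0‖ ∂ν :=
  conditional_error_minimized_at_center_general n r ν hsupp hinv
end
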